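/- arXiv:1206.0252 — 3 statements merged into one kernel-verified Lean document; each statement's English description precedes it below -/
import Mathlib

section
/- Let λ₁ > 0, λ₂ > 0, λ₃ < 0, let 0 < δ < 1 be sufficiently small and η > 0 with η = o(X). Then for all sufficiently large X, ∭_{[δX,(1-δ)X]³} max(0, η − |λ₁u₁ + λ₂u₂ + λ₃u₃|) du₁ du₂ du₃ ≫ η² X², with implied constant depending only on λ₁, λ₂, λ₃, δ. -/
open MeasureTheory Finset
open scoped Classical
noncomputable section

/-- `e(x) = e^{2πix}` -/
def e2 (x : ℝ) : ℂ := Complex.exp (2 * Real.pi * Complex.I * (x : ℂ))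

/-- Fejér-type kernel `K_η(α) = (sin(πηα)/(πα))²`, with `K_η(0) = η²`. -/
def Keta (η α : ℝ) : ℝ :=
  if α = 0 then η ^ 2 else (Real.sin (Real.pi * η * α) / (Real.pi * α)) ^ 2

/-- `S_k(α) = Σ_{δX ≤ p^k ≤ X} log p · e(p^k α)` over primes `p`. -/
def Skp (k δ X α : ℝ) : ℂ :=
  ∑ p ∈ Finset.range (⌊X⌋₊ + 1),
    if p.Prime ∧ δ * X ≤ (p : ℝ) ^ k ∧ (p : ℝ) ^ k ≤ X
      then (Real.log p : ℂ) * e2 ((p : ℝ) ^ k * α) else 0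

/-- `S₁(α) = Σ_{δX ≤ p ≤ X} log p · e(pα)` over primes `p`. -/
def Ssum (δ X α : ℝ) : ℂ :=
  ∑ p ∈ Finset.range (⌊X⌋₊ + 1),
    if p.Prime ∧ δ * X ≤ (p : ℝ) ∧ (p : ℝ) ≤ X
      then (Real.log p : ℂ) * e2 ((p : ℝ) * α) else 0

/-- `S(α) = Σ_{p ≤ X} log p · e(pα)` over primes `p`. -/
def Sfull (X α : ℝ) : ℂ :=
  ∑ p ∈ Finset.range (⌊X⌋₊ + 1),
    if p.Prime ∧ (p : ℝ) ≤ X then (Real.log p : ℂ) * e2 ((p : ℝ) * α) else 0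

/-- `U_k(α) = Σ_{δX ≤ n^k ≤ X} e(n^k α)` over positive integers `n`. -/
def Uk (k δ X α : ℝ) : ℂ :=
  ∑ n ∈ Finset.range (⌊X⌋₊ + 1),
    if 1 ≤ n ∧ δ * X ≤ (n : ℝ) ^ k ∧ (n : ℝ) ^ k ≤ X
      then e2 ((n : ℝ) ^ k * α) else 0

/-- `T_k(α) = ∫_{(δX)^{1/k}}^{X^{1/k}} e(t^k α) dt`. -/
def Tk (k δ X α : ℝ) : ℂ :=
  ∫ t in (δ * X) ^ (1 / k)..(X ^ (1 / k)), e2 (t ^ k * α)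

/-- Chebyshev function `θ(t) = Σ_{p ≤ t} log p`. -/
def chebθ (t : ℝ) : ℝ :=
  ∑ p ∈ Finset.range (⌊t⌋₊ + 1), if p.Prime then Real.log p else 0

/-- Generalized Selberg integral `J_k(X,h)`. -/
def Jsel (k X h : ℝ) : ℝ :=
  ∫ x in X..(2 * X),
    (chebθ ((x + h) ^ (1 / k)) - chebθ (x ^ (1 / k)) - ((x + h) ^ (1 / k) - x ^ (1 / k))) ^ 2

/-!
Write `L = -l3 > 0`. For fixed `u1, u2` the integrand is a tent in `u3` of height `η` centred at
`(l1 u1 + l2 u2) / L`; it is at least `η / 2` on an interval of length `η / L`, so whenever this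
interval lies in `[δX, (1 - δ)X]` the innermost integral is at least `η² / (2L)`. Choosing `t` with
`(l1 + l2) t = L (1 - t)`, the centre stays well inside `[δX, (1 - δ)X]` for all `u1, u2` in a box
of side `≍ X` around `(tX, tX)`, as soon as `δ` is small and `η = o(X)`; integrating over that box
gives `≫ η² X²`.
-/

open Set Filter

lemma mul_sub_le_intervalIntegral_of_subinterval {f : ℝ → ℝ} {a b c d M : ℝ}
    (hac : a ≤ c) (hcd : c ≤ d) (hdb : d ≤ b) (hf : IntervalIntegrable f volume a b)
    (hf0 : ∀ x ∈ Icc a b, 0 ≤ f x) (hM : ∀ x ∈ Icc c d, M ≤ f x) :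
    M * (d - c) ≤ ∫ x in a..b, f x := by
  have hfcd : IntervalIntegrable f volume c d :=
    hf.mono_set (uIcc_subset_uIcc (mem_uIcc_of_le hac (hcd.trans hdb))
      (mem_uIcc_of_le (hac.trans hcd) hdb))
  calc M * (d - c) = ∫ _ in c..d, M := by simp [mul_comm]
    _ ≤ ∫ x in c..d, f x := intervalIntegral.integral_mono_on hcd intervalIntegrable_const hfcd hM
    _ ≤ ∫ x in a..b, f x := intervalIntegral.integral_mono_interval hac hcd hdb
        ((ae_restrict_mem measurableSet_Ioc).mono fun x hx => hf0 x (Ioc_subset_Icc_self hx)) hf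

lemma mul_sq_le_intervalIntegral_intervalIntegral {f : ℝ → ℝ → ℝ} {a b c d M : ℝ}
    (hf : Continuous (Function.uncurry f)) (hac : a ≤ c) (hcd : c ≤ d) (hdb : d ≤ b)
    (hf0 : ∀ x ∈ Icc a b, ∀ y ∈ Icc a b, 0 ≤ f x y)
    (hM : ∀ x ∈ Icc c d, ∀ y ∈ Icc c d, M ≤ f x y) :
    M * (d - c) ^ 2 ≤ ∫ x in a..b, ∫ y in a..b, f x y := by
  have hab : a ≤ b := hac.trans (hcd.trans hdb)
  have hcont : Continuous fun x => ∫ y in a..b, f x y :=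
    intervalIntegral.continuous_parametric_intervalIntegral_of_continuous' hf a b
  rw [sq, ← mul_assoc]
  refine mul_sub_le_intervalIntegral_of_subinterval hac hcd hdb (hcont.intervalIntegrable a b)
    (fun x hx => intervalIntegral.integral_nonneg hab (hf0 x hx)) fun x hx => ?_
  exact mul_sub_le_intervalIntegral_of_subinterval hac hcd hdb
    ((hf.comp (Continuous.prodMk_right x)).intervalIntegrable a b)
    (hf0 x (Icc_subset_Icc hac hdb hx)) (hM x hx)

lemma sq_div_le_intervalIntegral_max_zero_sub_abs {η κ a A B : ℝ} (hκ : κ ≠ 0) (hη : 0 ≤ η)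
    (hA : A + η / (2 * |κ|) ≤ -a / κ) (hB : -a / κ + η / (2 * |κ|) ≤ B) :
    η ^ 2 / (2 * |κ|) ≤ ∫ u in A..B, max 0 (η - |a + κ * u|) := by
  set w := η / (2 * |κ|) with hw_def
  have hκ' : 0 < |κ| := abs_pos.2 hκ
  have hw : 0 ≤ w := by positivity
  have hplateau : ∀ u ∈ Icc (-a / κ - w) (-a / κ + w), η / 2 ≤ max 0 (η - |a + κ * u|) := by
    intro u hu
    have hdist : |u - -a / κ| ≤ w := abs_sub_le_iff.2 ⟨by linarith [hu.2], by linarith [hu.1]⟩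
    have habs : |a + κ * u| ≤ η / 2 := calc
      |a + κ * u| = |κ| * |u - -a / κ| := by rw [← abs_mul]; congr 1; field_simp; ring
      _ ≤ |κ| * w := mul_le_mul_of_nonneg_left hdist hκ'.le
      _ = η / 2 := by rw [hw_def]; field_simp
    exact le_max_of_le_right (by linarith)
  have hcont : Continuous fun u => max 0 (η - |a + κ * u|) := by fun_prop
  calc η ^ 2 / (2 * |κ|) = η / 2 * ((-a / κ + w) - (-a / κ - w)) := by
        rw [hw_def]; field_simp; ring
    _ ≤ _ := mul_sub_le_intervalIntegral_of_subinterval (by linarith) (by linarith) hB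
        (hcont.intervalIntegrable _ _) (fun _ _ => le_max_left _ _) hplateau

lemma sq_div_mul_sq_le_integral_cube_max_zero_sub_abs {l1 l2 l3 η A B c d : ℝ} (hl3 : l3 ≠ 0)
    (hη : 0 ≤ η) (hAc : A ≤ c) (hcd : c ≤ d) (hdB : d ≤ B)
    (hcentre : ∀ u1 ∈ Icc c d, ∀ u2 ∈ Icc c d,
      A + η / (2 * |l3|) ≤ -(l1 * u1 + l2 * u2) / l3 ∧
        -(l1 * u1 + l2 * u2) / l3 + η / (2 * |l3|) ≤ B) :
    η ^ 2 / (2 * |l3|) * (d - c) ^ 2 ≤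
      ∫ u1 in A..B, ∫ u2 in A..B, ∫ u3 in A..B, max 0 (η - |l1 * u1 + l2 * u2 + l3 * u3|) := by
  have hAB : A ≤ B := hAc.trans (hcd.trans hdB)
  refine mul_sq_le_intervalIntegral_intervalIntegral ?_ hAc hcd hdB
    (fun _ _ _ _ => intervalIntegral.integral_nonneg hAB fun _ _ => le_max_left _ _)
    fun u1 hu1 u2 hu2 => sq_div_le_intervalIntegral_max_zero_sub_abs hl3 hη
      (hcentre u1 hu1 u2 hu2).1 (hcentre u1 hu1 u2 hu2).2
  exact intervalIntegral.continuous_parametric_intervalIntegral_of_continuous'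
    (f := fun (p : ℝ × ℝ) u3 => max 0 (η - |l1 * p.1 + l2 * p.2 + l3 * u3|)) (by fun_prop) A B

lemma le_integral_scaled_cube_max_zero_sub_abs {l1 l2 L δ m t ε η X : ℝ}
    (hl1 : 0 < l1) (hl2 : 0 < l2) (hL : 0 < L) (hX : 0 < X) (hη : 0 ≤ η)
    (hcentre : (l1 + l2) * t = L * (1 - t)) (hmt : m ≤ t) (hmt' : m ≤ 1 - t)
    (hδ : δ < m / 2) (hε : 0 ≤ ε) (hεm : ε ≤ m / 4) (hεL : (l1 + l2) * ε ≤ L * (m / 4))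
    (hηX : η < L * m / 4 * X) :
    2 * ε ^ 2 / L * η ^ 2 * X ^ 2 ≤
      ∫ u1 in (δ * X)..((1 - δ) * X), ∫ u2 in (δ * X)..((1 - δ) * X),
        ∫ u3 in (δ * X)..((1 - δ) * X), max 0 (η - |l1 * u1 + l2 * u2 + -L * u3|) := by
  have hXm := mul_le_mul_of_nonneg_right hmt hX.le
  have hXm' := mul_le_mul_of_nonneg_right hmt' hX.le
  have hXδ := mul_le_mul_of_nonneg_right hδ.le hX.le
  have hXε := mul_le_mul_of_nonneg_right hεm hX.le
  have hXεL := mul_le_mul_of_nonneg_right hεL hX.le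
  have hXcentre := congrArg (· * X) hcentre
  calc 2 * ε ^ 2 / L * η ^ 2 * X ^ 2 = η ^ 2 / (2 * |-L|) * ((t + ε) * X - (t - ε) * X) ^ 2 := by
        rw [abs_neg, abs_of_pos hL]; field_simp; ring
    _ ≤ _ := by
      refine sq_div_mul_sq_le_integral_cube_max_zero_sub_abs (neg_ne_zero.2 hL.ne') hη
        (by nlinarith) (by nlinarith) (by nlinarith) fun u1 hu1 u2 hu2 => ?_
      have hlo : (l1 + l2) * ((t - ε) * X) ≤ l1 * u1 + l2 * u2 := by
        nlinarith [mul_le_mul_of_nonneg_left hu1.1 hl1.le, mul_le_mul_of_nonneg_left hu2.1 hl2.le]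
      have hhi : l1 * u1 + l2 * u2 ≤ (l1 + l2) * ((t + ε) * X) := by
        nlinarith [mul_le_mul_of_nonneg_left hu1.2 hl1.le, mul_le_mul_of_nonneg_left hu2.2 hl2.le]
      rw [abs_neg, abs_of_pos hL, neg_div_neg_eq]
      constructor
      · rw [le_div_iff₀ hL]; field_simp; nlinarith
      · rw [← le_sub_iff_add_le, div_le_iff₀ hL]; field_simp; nlinarith

theorem stmt4 (l1 l2 l3 : ℝ) (h1 : 0 < l1) (h2 : 0 < l2) (h3 : l3 < 0) :
    ∃ δ0 > (0 : ℝ), ∀ δ : ℝ, 0 < δ → δ < δ0 → ∃ c > (0 : ℝ), ∀ η : ℝ → ℝ,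
      (∀ X, 0 < η X) →
      Filter.Tendsto (fun X => η X / X) Filter.atTop (nhds 0) →
      ∃ X0 : ℝ, ∀ X ≥ X0,
        c * (η X) ^ 2 * X ^ 2 ≤
          ∫ u1 in (δ * X)..((1 - δ) * X), ∫ u2 in (δ * X)..((1 - δ) * X),
            ∫ u3 in (δ * X)..((1 - δ) * X),
              max 0 (η X - |l1 * u1 + l2 * u2 + l3 * u3|) := by
  obtain ⟨L, hL, rfl⟩ : ∃ L, 0 < L ∧ l3 = -L := ⟨-l3, by linarith, by ring⟩
  -- `u1 = u2 = t X`, `u3 = (1 - t) X` is a point of the plane `l1 u1 + l2 u2 = L u3`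
  set t := L / (l1 + l2 + L) with ht
  set m := min L (l1 + l2) / (l1 + l2 + L)
  have hm0 : 0 < m := by positivity
  have hcentre : (l1 + l2) * t = L * (1 - t) := by rw [ht]; field_simp; ring
  have hmt : m ≤ t := div_le_div_of_nonneg_right (min_le_left _ _) (by positivity)
  have hmt' : m ≤ 1 - t := by
    rw [show 1 - t = (l1 + l2) / (l1 + l2 + L) by rw [ht]; field_simp; ring]
    exact div_le_div_of_nonneg_right (min_le_right _ _) (by positivity)
  set ε := m / 4 * t with hε
  have hεm : ε ≤ m / 4 := mul_le_of_le_one_right (by positivity) (by linarith)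
  have hεL : (l1 + l2) * ε ≤ L * (m / 4) := by
    rw [hε, mul_left_comm, hcentre]
    nlinarith [mul_nonneg (mul_pos hm0 hL).le (hm0.le.trans hmt)]
  refine ⟨m / 2, by positivity, fun δ _ hδ =>
    ⟨2 * ε ^ 2 / L, by positivity, fun η hη hηX => ?_⟩⟩
  obtain ⟨X0, hX0⟩ := eventually_atTop.1 <| (eventually_gt_atTop 0).and
    (hηX.eventually (gt_mem_nhds (show (0 : ℝ) < L * m / 4 by positivity)))
  refine ⟨X0, fun X hX => ?_⟩
  obtain ⟨hXpos, hηsmall⟩ := hX0 X hX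
  exact le_integral_scaled_cube_max_zero_sub_abs h1 h2 hL hXpos (hη X).le hcentre hmt hmt' hδ
    (by positivity) hεm hεL ((div_lt_iff₀ hXpos).1 hηsmall)
end
end

section
/- If a₁, a₂, q₁, q₂ are integers with a₁a₂ ≠ 0, |λ₁αq₁ − a₁| ≤ Q/X and |λ₂αq₂ − a₂| ≤ Q/X for some α ≠ 0, then |a₂q₁(λ₁/λ₂) − a₁q₂| ≤ 2(1 + |λ₁/λ₂|)·(max(|a₁|,|a₂|)/|λ₂α|)·(Q/X). In particular if |aᵢ| ≤ 2|λᵢ|·|α|·qᵢ and qᵢ ≤ Q then |a₂q₁(λ₁/λ₂) − a₁q₂| ≤ C(λ₁,λ₂)·Q²/X. -/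
open MeasureTheory Finset
open scoped Classical
noncomputable section

/-
Writing `dᵢ = λᵢ α qᵢ - aᵢ` for the two approximation errors,
`a₂ q₁ (λ₁/λ₂) - a₁ q₂ = (d₁ a₂ - d₂ a₁) / (λ₂ α)`,
so the left side is at most `2 max(|a₁|, |a₂|) / |λ₂ α|` times the common error bound.
Under `|aᵢ| ≤ 2 |λᵢ| |α| qᵢ` and `qᵢ ≤ Q` the maximum is at most `2 max(|λ₁|, |λ₂|) |α| Q`.
-/

theorem cross_sub_eq_errors_div {K : Type*} [Field K] (l1 l2 α a1 a2 q1 q2 : K)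
    (hl2 : l2 ≠ 0) (hα : α ≠ 0) :
    a2 * q1 * (l1 / l2) - a1 * q2
      = ((l1 * α * q1 - a1) * a2 - (l2 * α * q2 - a2) * a1) / (l2 * α) := by
  field_simp
  ring

section Approximation

variable {K : Type*} [Field K] [LinearOrder K] [IsStrictOrderedRing K]

theorem abs_cross_sub_le (l1 l2 α a1 a2 q1 q2 ε : K) (hl2 : l2 ≠ 0) (hα : α ≠ 0)
    (hd1 : |l1 * α * q1 - a1| ≤ ε) (hd2 : |l2 * α * q2 - a2| ≤ ε) :
    |a2 * q1 * (l1 / l2) - a1 * q2| ≤ 2 * max |a1| |a2| / |l2 * α| * ε := by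
  have hnum : |(l1 * α * q1 - a1) * a2 - (l2 * α * q2 - a2) * a1| ≤ 2 * max |a1| |a2| * ε :=
    calc |(l1 * α * q1 - a1) * a2 - (l2 * α * q2 - a2) * a1|
        ≤ |l1 * α * q1 - a1| * |a2| + |l2 * α * q2 - a2| * |a1| := by
          rw [← abs_mul, ← abs_mul]; exact abs_sub _ _
      _ ≤ ε * max |a1| |a2| + ε * max |a1| |a2| := by
          gcongr
          · exact (abs_nonneg _).trans hd1
          · exact le_max_right _ _
          · exact (abs_nonneg _).trans hd2
          · exact le_max_left _ _
      _ = 2 * max |a1| |a2| * ε := by ring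
  rw [cross_sub_eq_errors_div l1 l2 α a1 a2 q1 q2 hl2 hα, abs_div, div_mul_eq_mul_div]
  exact div_le_div_of_nonneg_right hnum (abs_nonneg _)

theorem max_abs_le_of_abs_le_mul {l1 l2 α a1 a2 q1 q2 Q : K}
    (h1 : |a1| ≤ 2 * |l1| * |α| * q1) (h2 : |a2| ≤ 2 * |l2| * |α| * q2)
    (hq1 : q1 ≤ Q) (hq2 : q2 ≤ Q) (hQ : 0 ≤ Q) :
    max |a1| |a2| ≤ 2 * max |l1| |l2| * |α| * Q := by
  apply max_le
  · exact h1.trans (by grw [hq1, le_max_left |l1| |l2|])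
  · exact h2.trans (by grw [hq2, le_max_right |l1| |l2|])

end Approximation

theorem stmt10_general (l1 l2 α Q X : ℝ) (hl2 : l2 ≠ 0) (hα : α ≠ 0)
    (hQ : 0 < Q)
    (a1 a2 q1 q2 : ℤ)
    (hd1 : |l1 * α * (q1 : ℝ) - (a1 : ℝ)| ≤ Q / X)
    (hd2 : |l2 * α * (q2 : ℝ) - (a2 : ℝ)| ≤ Q / X) :
    |(a2 : ℝ) * (q1 : ℝ) * (l1 / l2) - (a1 : ℝ) * (q2 : ℝ)|
      ≤ 2 * (1 + |l1 / l2|) * (max |(a1 : ℝ)| |(a2 : ℝ)| / |l2 * α|) * (Q / X) ∧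
    (|(a1 : ℝ)| ≤ 2 * |l1| * |α| * (q1 : ℝ) → |(a2 : ℝ)| ≤ 2 * |l2| * |α| * (q2 : ℝ) →
      (q1 : ℝ) ≤ Q → (q2 : ℝ) ≤ Q →
      |(a2 : ℝ) * (q1 : ℝ) * (l1 / l2) - (a1 : ℝ) * (q2 : ℝ)|
        ≤ (4 * (1 + |l1 / l2|) * max |l1| |l2| / |l2|) * Q ^ 2 / X) := by
  have hQX : 0 ≤ Q / X := (abs_nonneg _).trans hd1
  have hr : (1 : ℝ) ≤ 1 + |l1 / l2| := le_add_of_nonneg_right (abs_nonneg _)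
  have hmain := abs_cross_sub_le l1 l2 α (a1 : ℝ) a2 q1 q2 (Q / X) hl2 hα hd1 hd2
  refine ⟨?_, fun h1 h2 hq1 hq2 => ?_⟩
  · calc |(a2 : ℝ) * q1 * (l1 / l2) - a1 * q2|
        ≤ 2 * 1 * (max |(a1 : ℝ)| |(a2 : ℝ)| / |l2 * α|) * (Q / X) := hmain.trans_eq (by ring)
      _ ≤ 2 * (1 + |l1 / l2|) * (max |(a1 : ℝ)| |(a2 : ℝ)| / |l2 * α|) * (Q / X) := by
        gcongr
  calc |(a2 : ℝ) * q1 * (l1 / l2) - a1 * q2|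
      ≤ 2 * (2 * max |l1| |l2| * |α| * Q) / |l2 * α| * (Q / X) := by
        refine hmain.trans ?_
        gcongr
        exact max_abs_le_of_abs_le_mul h1 h2 hq1 hq2 hQ.le
    _ = 1 * (4 * max |l1| |l2| / |l2|) * (Q * (Q / X)) := by
        rw [abs_mul]
        field_simp
        ring
    _ ≤ (1 + |l1 / l2|) * (4 * max |l1| |l2| / |l2|) * (Q * (Q / X)) := by
        gcongr
    _ = (4 * (1 + |l1 / l2|) * max |l1| |l2| / |l2|) * Q ^ 2 / X := by ring

theorem stmt10 (l1 l2 α Q X : ℝ) (hl1 : l1 ≠ 0) (hl2 : l2 ≠ 0) (hα : α ≠ 0)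
    (hQ : 0 < Q) (hX : 0 < X) (hQX : Q ≤ X)
    (a1 a2 q1 q2 : ℤ) (ha : a1 * a2 ≠ 0) (hq1 : 1 ≤ q1) (hq2 : 1 ≤ q2)
    (hd1 : |l1 * α * (q1 : ℝ) - (a1 : ℝ)| ≤ Q / X)
    (hd2 : |l2 * α * (q2 : ℝ) - (a2 : ℝ)| ≤ Q / X) :
    |(a2 : ℝ) * (q1 : ℝ) * (l1 / l2) - (a1 : ℝ) * (q2 : ℝ)|
      ≤ 2 * (1 + |l1 / l2|) * (max |(a1 : ℝ)| |(a2 : ℝ)| / |l2 * α|) * (Q / X) ∧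
    (|(a1 : ℝ)| ≤ 2 * |l1| * |α| * (q1 : ℝ) → |(a2 : ℝ)| ≤ 2 * |l2| * |α| * (q2 : ℝ) →
      (q1 : ℝ) ≤ Q → (q2 : ℝ) ≤ Q →
      |(a2 : ℝ) * (q1 : ℝ) * (l1 / l2) - (a1 : ℝ) * (q2 : ℝ)|
        ≤ (4 * (1 + |l1 / l2|) * max |l1| |l2| / |l2|) * Q ^ 2 / X) :=
  stmt10_general l1 l2 α Q X hl2 hα hQ a1 a2 q1 q2 hd1 hd2
end
end

section
/- For k ≥ 1 real, λ ≠ 0, X ≥ 2 and 1/X ≤ P/X ≤ 1, ∫_{−P/X}^{P/X} |T₁(λ₂α)|² |T_k(λ₃α)|² dα ≪ X^{1+2/k}, where T_j(α) = ∫_{(δX)^{1/j}}^{X^{1/j}} e(t^jα) dt. -/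
open MeasureTheory Finset
open scoped Classical
noncomputable section

/-!
Bound `|T_k|² ≤ X^{2/k}` trivially and `|T₁(β)|² ≤ min(X, 1/(π|β|))² ≤ 2X² / (1 + (πXβ)²)`.
The integral of this Lorentzian over the whole real line is `2X / |λ₂|`, so no splitting of the
range at `|α| = 1/X` is needed.
-/

lemma norm_e2 (x : ℝ) : ‖e2 x‖ = 1 := by
  rw [e2, show 2 * (Real.pi : ℂ) * Complex.I * x = ((2 * Real.pi * x : ℝ) : ℂ) * Complex.I by
    push_cast; ring, Complex.norm_exp_ofReal_mul_I]

lemma norm_Tk_le {k δ X : ℝ} (hk : 0 ≤ k) (hδ0 : 0 ≤ δ) (hδ1 : δ ≤ 1) (hX : 0 ≤ X) (β : ℝ) :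
    ‖Tk k δ X β‖ ≤ X ^ (1 / k) := by
  have hk' : 0 ≤ 1 / k := one_div_nonneg.mpr hk
  have hlo : 0 ≤ (δ * X) ^ (1 / k) := Real.rpow_nonneg (by positivity) _
  have hle : (δ * X) ^ (1 / k) ≤ X ^ (1 / k) :=
    Real.rpow_le_rpow (by positivity) (by nlinarith) hk'
  calc ‖Tk k δ X β‖ ≤ 1 * |X ^ (1 / k) - (δ * X) ^ (1 / k)| :=
        intervalIntegral.norm_integral_le_of_norm_le_const fun t _ => (norm_e2 _).le
    _ ≤ X ^ (1 / k) := by rw [one_mul, abs_of_nonneg (by linarith)]; linarith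

/-- `|∫ₐᵇ e(tθ) dt| ≤ 1 / (π|θ|)`, multiplied out so that it also holds at `θ = 0`. -/
lemma norm_integral_e2_mul_mul_le (a b θ : ℝ) :
    ‖∫ t in a..b, e2 (t * θ)‖ * (Real.pi * |θ|) ≤ 1 := by
  rcases eq_or_ne θ 0 with rfl | hθ
  · simp
  set c : ℂ := 2 * Real.pi * Complex.I * θ
  have hc : c ≠ 0 := by simp [c, Complex.ext_iff, Real.pi_ne_zero, hθ]
  have hnc : ‖c‖ = 2 * (Real.pi * |θ|) := by
    simp [c, Complex.norm_real, abs_of_nonneg Real.pi_pos.le]; ring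
  have hexp : ∀ y : ℝ, ‖Complex.exp (c * y)‖ = 1 := fun y => by
    simpa [e2, c, mul_comm, mul_left_comm, mul_assoc] using norm_e2 (y * θ)
  have hint : ∫ t in a..b, e2 (t * θ) = (Complex.exp (c * b) - Complex.exp (c * a)) / c := by
    rw [← integral_exp_mul_complex hc]
    refine intervalIntegral.integral_congr fun t _ => ?_
    simp only [e2, c]; push_cast; ring_nf
  have hdiff : ‖Complex.exp (c * b) - Complex.exp (c * a)‖ ≤ 2 :=
    (norm_sub_le _ _).trans (by rw [hexp, hexp]; norm_num)
  have hpos : 0 < Real.pi * |θ| := by positivity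
  rw [hint, norm_div, hnc, div_mul_eq_mul_div, div_le_one (by positivity)]
  nlinarith

lemma norm_Tk_sq_le {k δ X : ℝ} (hk : 0 ≤ k) (hδ0 : 0 ≤ δ) (hδ1 : δ ≤ 1) (hX : 0 ≤ X) (β : ℝ) :
    ‖Tk k δ X β‖ ^ 2 ≤ X ^ (2 / k) :=
  calc ‖Tk k δ X β‖ ^ 2 ≤ (X ^ (1 / k)) ^ 2 :=
        pow_le_pow_left₀ (norm_nonneg _) (norm_Tk_le hk hδ0 hδ1 hX β) 2
    _ = X ^ (2 / k) := by rw [← Real.rpow_mul_natCast hX]; ring_nf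

lemma norm_Tk_one_sq_le {δ X : ℝ} (hδ0 : 0 ≤ δ) (hδ1 : δ ≤ 1) (hX : 0 ≤ X) (β : ℝ) :
    ‖Tk 1 δ X β‖ ^ 2 ≤ 2 * X ^ 2 / (1 + (Real.pi * X * β) ^ 2) := by
  have htriv : ‖Tk 1 δ X β‖ ≤ X := by
    simpa using norm_Tk_le zero_le_one hδ0 hδ1 hX β
  have hdecay : ‖Tk 1 δ X β‖ * (Real.pi * |β|) ≤ 1 := by
    simpa [Tk] using norm_integral_e2_mul_mul_le (δ * X) X β
  have hT := norm_nonneg (Tk 1 δ X β)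
  have h1 : ‖Tk 1 δ X β‖ ^ 2 ≤ X ^ 2 := pow_le_pow_left₀ hT htriv 2
  have h2 : (‖Tk 1 δ X β‖ * (Real.pi * |β|)) ^ 2 ≤ 1 :=
    pow_le_one₀ (by positivity) hdecay
  have hsq : (Real.pi * X * β) ^ 2 = (Real.pi * |β|) ^ 2 * X ^ 2 := by
    rw [mul_pow Real.pi, sq_abs]; ring
  rw [le_div_iff₀ (by positivity), hsq]
  nlinarith [sq_nonneg X]

lemma abs_integral_one_div_one_add_mul_sq_le (a b : ℝ) {c : ℝ} (hc : c ≠ 0) :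
    |∫ α in a..b, 1 / (1 + (c * α) ^ 2)| ≤ Real.pi / |c| := by
  rw [intervalIntegral.integral_comp_mul_left (fun x => 1 / (1 + x ^ 2)) hc,
    integral_one_div_one_add_sq, smul_eq_mul, abs_mul, abs_inv, div_eq_inv_mul]
  gcongr
  have := Real.arctan_lt_pi_div_two (c * b)
  have := Real.neg_pi_div_two_lt_arctan (c * b)
  have := Real.arctan_lt_pi_div_two (c * a)
  have := Real.neg_pi_div_two_lt_arctan (c * a)
  rw [abs_le]; constructor <;> linarith

theorem stmt13_general (k δ : ℝ) (hk : 1 ≤ k) (hδ0 : 0 < δ) (hδ1 : δ < 1)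
    (l2 l3 : ℝ) (h2 : l2 ≠ 0) :
    ∃ C > (0 : ℝ), ∀ X ≥ (2 : ℝ), ∀ P : ℝ, 1 ≤ P → P ≤ X →
      (∫ α in (-(P / X))..(P / X), ‖Tk 1 δ X (l2 * α)‖ ^ 2 * ‖Tk k δ X (l3 * α)‖ ^ 2)
        ≤ C * X ^ (1 + 2 / k) := by
  refine ⟨2 / |l2|, by positivity, fun X hX P _ _ => ?_⟩
  have hX0 : 0 < X := by linarith
  set M := 2 * X ^ 2 * X ^ (2 / k)
  set c := Real.pi * X * l2
  have hc : c ≠ 0 := by positivity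
  have hpoint (α : ℝ) :
      ‖Tk 1 δ X (l2 * α)‖ ^ 2 * ‖Tk k δ X (l3 * α)‖ ^ 2 ≤ M * (1 / (1 + (c * α) ^ 2)) := by
    have h1 := norm_Tk_one_sq_le hδ0.le hδ1.le hX0.le (l2 * α)
    rw [← mul_assoc] at h1
    calc _ ≤ 2 * X ^ 2 / (1 + (c * α) ^ 2) * X ^ (2 / k) :=
          mul_le_mul h1 (norm_Tk_sq_le (by linarith) hδ0.le hδ1.le hX0.le _)
            (by positivity) (by positivity)
      _ = _ := by ring
  calc _ ≤ ‖∫ α in (-(P / X))..(P / X), ‖Tk 1 δ X (l2 * α)‖ ^ 2 * ‖Tk k δ X (l3 * α)‖ ^ 2‖ :=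
        Real.le_norm_self _
    _ ≤ |∫ α in (-(P / X))..(P / X), M * (1 / (1 + (c * α) ^ 2))| :=
        intervalIntegral.norm_integral_le_abs_of_norm_le
          (.of_forall fun α => by rw [Real.norm_of_nonneg (by positivity)]; exact hpoint α)
          ((continuous_const.div (by fun_prop) fun α => by positivity).const_mul M
            |>.intervalIntegrable _ _)
    _ ≤ M * (Real.pi / |c|) := by
        rw [intervalIntegral.integral_const_mul, abs_mul, abs_of_pos (by positivity)]
        gcongr
        exact abs_integral_one_div_one_add_mul_sq_le _ _ hc
    _ = 2 / |l2| * X ^ (1 + 2 / k) := by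
        rw [Real.rpow_add hX0, Real.rpow_one]
        simp only [M, c, abs_mul, abs_of_pos hX0, abs_of_pos Real.pi_pos]
        field_simp

theorem stmt13 (k δ : ℝ) (hk : 1 ≤ k) (hδ0 : 0 < δ) (hδ1 : δ < 1)
    (l2 l3 : ℝ) (h2 : l2 ≠ 0) (h3 : l3 ≠ 0) :
    ∃ C > (0 : ℝ), ∀ X ≥ (2 : ℝ), ∀ P : ℝ, 1 ≤ P → P ≤ X →
      (∫ α in (-(P / X))..(P / X), ‖Tk 1 δ X (l2 * α)‖ ^ 2 * ‖Tk k δ X (l3 * α)‖ ^ 2)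
        ≤ C * X ^ (1 + 2 / k) :=
  stmt13_general k δ hk hδ0 hδ1 l2 l3 h2
end
end
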